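/- arXiv:2206.14799 — 5 statements merged into one kernel-verified Lean document; each statement's English description precedes it below -/
import Mathlib

section
/- Let G be a finite p-supersolvable group and P a Sylow p-subgroup of G. If the normalizer N_G(P) is p-nilpotent, then G is p-nilpotent. -/
open Subgroup Pointwise

/-- `A < B` is a chief factor of `G`. -/
def IsChiefFactor (G : Type*) [Group G] (A B : Subgroup G) : Prop :=
  A.Normal ∧ B.Normal ∧ A < B ∧
    ∀ N : Subgroup G, N.Normal → A ≤ N → N ≤ B → N = A ∨ N = B

/-- The order of the factor group `B/A`. -/
noncomputable def factorCard {G : Type*} [Group G] (A B : Subgroup G) : ℕ :=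
  Nat.card B / Nat.card A

/-- A finite group is `p`-solvable if every chief factor is a `p`-group or a `p'`-group. -/
def IsPSolvable (p : ℕ) (G : Type*) [Group G] : Prop :=
  ∀ A B : Subgroup G, IsChiefFactor G A B →
    (∃ n : ℕ, factorCard A B = p ^ n) ∨ ¬ p ∣ factorCard A B

/-- A finite group is `p`-supersolvable if it is `p`-solvable and every `p`-chief factor
has order `p`. -/
def IsPSupersolvable (p : ℕ) (G : Type*) [Group G] : Prop :=
  IsPSolvable p G ∧ ∀ A B : Subgroup G, IsChiefFactor G A B →
    p ∣ factorCard A B → factorCard A B = p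

/-- A finite group is `p`-nilpotent if it has a normal Hall `p'`-subgroup. -/
def IsPNilpotent (p : ℕ) (G : Type*) [Group G] : Prop :=
  ∃ H : Subgroup G, H.Normal ∧ ¬ p ∣ Nat.card H ∧ ∃ n : ℕ, H.index = p ^ n

/-- The quotient `G ⧸ N` is `p`-supersolvable (for `N` normal). -/
def QuotientIsPSupersolvable (p : ℕ) {G : Type*} [Group G] (N : Subgroup G) : Prop :=
  ∀ [N.Normal], IsPSupersolvable p (G ⧸ N)

/-- `R` is the `p`-supersolvable residual of `G`: the smallest normal subgroup with
`p`-supersolvable quotient. -/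
def IsPSupersolvableResidual (p : ℕ) {G : Type*} [Group G] (R : Subgroup G) : Prop :=
  R.Normal ∧ QuotientIsPSupersolvable p R ∧
    ∀ N : Subgroup G, N.Normal → QuotientIsPSupersolvable p N → R ≤ N

/-- the center `Z(K)` of a subgroup `K`, as a subgroup of the ambient group. -/
def centerOf {G : Type*} [Group G] (K : Subgroup G) : Subgroup G :=
  Subgroup.centralizer (K : Set G) ⊓ K

/-- `H` is c-embedded in `G` with respect to `K`: there is `B ≤ G` with `G = HB` and
`H ∩ B ≤ Z(K)`. -/
def IsCEmbedded {G : Type*} [Group G] (H K : Subgroup G) : Prop :=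
  ∃ B : Subgroup G, (∀ g : G, ∃ h ∈ H, ∃ b ∈ B, g = h * b) ∧ H ⊓ B ≤ centerOf K

/-- A group is quaternion-free if no section is isomorphic to the quaternion group `Q₈`. -/
def QuaternionFree (G : Type*) [Group G] : Prop :=
  ∀ (H : Subgroup G) (N : Subgroup H) [N.Normal], IsEmpty ((H ⧸ N) ≃* QuaternionGroup 2)

/-- the conjugate `P^x = x⁻¹ P x`. -/
def conjSub {G : Type*} [Group G] (P : Subgroup G) (x : G) : Subgroup G :=
  (MulAut.conj x⁻¹) • P

/-!
Induction over a minimal normal subgroup `N` shows that a `p`-supersolvable group has a normal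
`p`-nilpotent subgroup `C` of `p'`-index. If `N` is a `p'`-group, the subgroup lifts from `G/N`
directly. Otherwise `|N| = p`; then `C_G(N)` has `p'`-index because `G/C_G(N)` embeds in
`Aut N`, of order `p - 1`, and in the lift intersected with `C_G(N)` the subgroup `N` is central,
so Schur–Zassenhaus splits it off.

The normal `p`-complement `H` of `C` is a normal Hall subgroup, hence characteristic in `C` and
normal in `G`, and `C = HP`. By the Frattini argument `G = N_G(P) C = N_G(P) H`, so `G/H` is a
quotient of `N_G(P)`, hence `p`-nilpotent, and so is `G` because `H` is a `p'`-group.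
-/

namespace Subgroup

variable {G : Type*} [Group G]

theorem le_of_coprime_card_index {H K : Subgroup G} [H.Normal]
    (h : (Nat.card K).Coprime H.index) : K ≤ H := by
  rw [← QuotientGroup.ker_mk' H, ← map_eq_bot_iff, ← card_eq_one]
  exact Nat.eq_one_of_dvd_coprimes h (card_map_dvd _ _)
    (index_eq_card H ▸ card_subgroup_dvd_card _)

theorem characteristic_of_coprime_card_index {H : Subgroup G} [H.Normal]
    (h : (Nat.card H).Coprime H.index) : H.Characteristic :=
  characteristic_iff_map_le.mpr fun φ ↦
    le_of_coprime_card_index (by rwa [card_map_of_injective φ.injective])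

end Subgroup

section PNilpotent

variable {p : ℕ} {G G' : Type*} [Group G] [Group G']

theorem isPNilpotent_of_not_dvd_card (h : ¬ p ∣ Nat.card G) : IsPNilpotent p G :=
  ⟨⊤, inferInstance, by rwa [card_top], 0, by rw [index_top, pow_zero]⟩

theorem exists_index_comap_eq_pow (hp : p.Prime) {K : Subgroup G'} [K.Normal] {n : ℕ}
    (hK : K.index = p ^ n) (f : G →* G') : ∃ m, (K.comap f).index = p ^ m := by
  obtain ⟨m, -, hm⟩ := (Nat.dvd_prime_pow hp).mp
    (hK ▸ index_comap K f ▸ relIndex_dvd_index_of_normal K f.range)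
  exact ⟨m, hm⟩

theorem IsPNilpotent.of_surjective (hp : p.Prime) {f : G →* G'} (hf : Function.Surjective f)
    (h : IsPNilpotent p G) : IsPNilpotent p G' := by
  obtain ⟨H, hH, hcard, n, hidx⟩ := h
  obtain ⟨m, -, hm⟩ := (Nat.dvd_prime_pow hp).mp (hidx ▸ H.index_map_dvd hf)
  exact ⟨H.map f, hH.map f hf, fun hd ↦ hcard (hd.trans (card_map_dvd H f)), m, hm⟩

theorem IsPNilpotent.exists_normal_le (hp : p.Prime) {W : Subgroup G} [W.Normal]
    (h : IsPNilpotent p W) :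
    ∃ H : Subgroup G, H.Normal ∧ H ≤ W ∧ ¬ p ∣ Nat.card H ∧
      ∃ n, H.relIndex W = p ^ n := by
  obtain ⟨Q, hQ, hcard, n, hidx⟩ := h
  have : Q.Characteristic := characteristic_of_coprime_card_index
    (hidx ▸ (Nat.coprime_comm.mp ((hp.coprime_iff_not_dvd).mpr hcard)).pow_right n)
  refine ⟨Q.map W.subtype, inferInstance, map_subtype_le Q, ?_, n, ?_⟩
  · rwa [card_map_of_injective W.subtype_injective]
  · rw [relIndex, subgroupOf, comap_map_eq_self_of_injective W.subtype_injective, hidx]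

theorem IsPNilpotent.of_normal_of_index_eq_pow (hp : p.Prime) {W : Subgroup G} [W.Normal]
    (hidx : ∃ m, W.index = p ^ m) (h : IsPNilpotent p W) : IsPNilpotent p G := by
  obtain ⟨H, hH, hHW, hcard, n, hn⟩ := h.exists_normal_le hp
  obtain ⟨m, hm⟩ := hidx
  exact ⟨H, hH, hcard, n + m, by rw [← relIndex_mul_index hHW, hn, hm, pow_add]⟩

theorem isPNilpotent_of_le_center [Finite G] (hp : p.Prime) {Z : Subgroup G}
    (hZ : Z ≤ center G) (hZp : IsPGroup p Z) (hidx : ¬ p ∣ Z.index) : IsPNilpotent p G := by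
  have : Fact p.Prime := ⟨hp⟩
  have : Z.Normal := ⟨fun z hz g ↦ by rwa [mem_center_iff.mp (hZ hz) g, mul_inv_cancel_right]⟩
  obtain ⟨k, hk⟩ := hZp.exists_card_eq
  obtain ⟨Q, hQ⟩ := exists_right_complement'_of_coprime
    (hk ▸ ((hp.coprime_iff_not_dvd).mpr hidx).pow_left k)
  -- `Z` is central and `ZQ = G`, so everything normalizes `Q`.
  have : Q.Normal := normalizer_eq_top_iff.mp <| top_le_iff.mp <|
    hQ.sup_eq_top ▸ sup_le (hZ.trans (center_le_normalizer _)) le_normalizer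
  exact ⟨Q, this, hQ.symm.index_eq_card ▸ hidx, k, by rw [hQ.index_eq_card, hk]⟩

theorem IsPNilpotent.exists_normal_ker_le (hp : p.Prime) (f : G →* G')
    (h : IsPNilpotent p G') : ∃ W : Subgroup G, W.Normal ∧ f.ker ≤ W ∧
      (∃ m, W.index = p ^ m) ∧ ¬ p ∣ (f.ker.subgroupOf W).index := by
  obtain ⟨K, hK, hcard, n, hidx⟩ := h
  refine ⟨K.comap f, hK.comap f, f.ker_le_comap K, exists_index_comap_eq_pow hp hidx f, ?_⟩
  rw [← MonoidHom.ker_domRestrict, index_ker, MonoidHom.domRestrict_range]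
  exact fun hd ↦ hcard (hd.trans (card_dvd_of_le (map_comap_le f K)))

theorem IsPNilpotent.of_not_dvd_card_ker [Finite G] (hp : p.Prime) (f : G →* G')
    (hker : ¬ p ∣ Nat.card f.ker) (h : IsPNilpotent p G') : IsPNilpotent p G := by
  obtain ⟨W, _, hkerW, hidx, hker'⟩ := h.exists_normal_ker_le hp f
  refine .of_normal_of_index_eq_pow hp hidx (isPNilpotent_of_not_dvd_card ?_)
  rw [← card_mul_index (f.ker.subgroupOf W), Nat.card_congr (subgroupOfEquivOfLe hkerW).toEquiv]
  exact fun hd ↦ (hp.dvd_mul.mp hd).elim hker hker'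

theorem IsPNilpotent.of_ker_le_center [Finite G] (hp : p.Prime) (f : G →* G')
    (hcen : f.ker ≤ center G) (hker : IsPGroup p f.ker) (h : IsPNilpotent p G') :
    IsPNilpotent p G := by
  obtain ⟨W, _, hkerW, hidx, hker'⟩ := h.exists_normal_ker_le hp f
  refine .of_normal_of_index_eq_pow hp hidx (isPNilpotent_of_le_center hp ?_ ?_ hker')
  · exact fun x hx ↦ mem_center_iff.mpr fun y ↦ Subtype.ext (mem_center_iff.mp (hcen hx) y)
  · exact hker.of_equiv (subgroupOfEquivOfLe hkerW).symm

end PNilpotent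

section ChiefFactor

variable {p : ℕ} {G G' : Type*} [Group G] [Group G'] {f : G →* G'}

theorem IsChiefFactor.comap (hf : Function.Surjective f) {A B : Subgroup G'}
    (h : IsChiefFactor G' A B) : IsChiefFactor G (A.comap f) (B.comap f) := by
  obtain ⟨hA, hB, hAB, hmin⟩ := h
  refine ⟨hA.comap f, hB.comap f, (comap_lt_comap_of_surjective hf).mpr hAB,
    fun N hN hAN hNB ↦ ?_⟩
  have hN_eq : (N.map f).comap f = N := comap_map_eq_self ((ker_le_comap f A).trans hAN)
  have hAN' : A ≤ N.map f := by
    simpa only [map_comap_eq_self_of_surjective hf] using map_mono (f := f) hAN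
  have hNB' : N.map f ≤ B := by
    simpa only [map_comap_eq_self_of_surjective hf] using map_mono (f := f) hNB
  rcases hmin (N.map f) (hN.map f hf) hAN' hNB' with h | h
  · exact .inl (h ▸ hN_eq).symm
  · exact .inr (h ▸ hN_eq).symm

theorem card_comap_of_surjective [Finite G] (hf : Function.Surjective f) (A : Subgroup G') :
    Nat.card (A.comap f) = Nat.card A * Nat.card f.ker := by
  have : Finite G' := Finite.of_surjective f hf
  have hA := card_mul_index (A.comap f)
  rw [index_comap_of_surjective A hf] at hA
  have hker := card_mul_index f.ker
  rw [index_ker, f.range_eq_top_of_surjective hf, card_top] at hker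
  apply Nat.eq_of_mul_eq_mul_right (Nat.pos_of_ne_zero A.index_ne_zero_of_finite)
  rw [hA, mul_right_comm, card_mul_index, ← hker, mul_comm]

theorem factorCard_comap [Finite G] (hf : Function.Surjective f) (A B : Subgroup G') :
    factorCard (A.comap f) (B.comap f) = factorCard A B := by
  simp only [factorCard, card_comap_of_surjective hf, Nat.mul_div_mul_right _ _ Nat.card_pos]

theorem IsPSupersolvable.of_surjective [Finite G] (hf : Function.Surjective f)
    (h : IsPSupersolvable p G) : IsPSupersolvable p G' :=
  ⟨fun A B hAB ↦ factorCard_comap hf A B ▸ h.1 _ _ (hAB.comap hf),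
    fun A B hAB ↦ factorCard_comap hf A B ▸ h.2 _ _ (hAB.comap hf)⟩

theorem exists_isChiefFactor_bot [Finite G] [Nontrivial G] : ∃ N, IsChiefFactor G ⊥ N := by
  obtain ⟨N, hN⟩ := Set.Finite.exists_minimal (s := {N : Subgroup G | N.Normal ∧ N ≠ ⊥})
    (Set.toFinite _) ⟨⊤, inferInstance, top_ne_bot⟩
  refine ⟨N, inferInstance, hN.prop.1, bot_lt_iff_ne_bot.mpr hN.prop.2, fun M hM _ hMN ↦ ?_⟩
  by_cases hMbot : M = ⊥
  · exact .inl hMbot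
  · exact .inr (le_antisymm hMN (hN.le_of_le ⟨hM, hMbot⟩ hMN))

end ChiefFactor

theorem exists_ker_eq_subgroupOf {G : Type*} [Group G] {N C : Subgroup G} [N.Normal]
    {Cb : Subgroup (G ⧸ N)} (hC : C ≤ Cb.comap (QuotientGroup.mk' N)) :
    ∃ f : C →* Cb, f.ker = N.subgroupOf C :=
  ⟨((QuotientGroup.mk' N).comp C.subtype).codRestrict Cb fun x ↦ hC x.2, by
    ext x
    rw [MonoidHom.mem_ker, mem_subgroupOf, ← QuotientGroup.eq_one_iff, ← Subtype.val_inj]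
    rfl⟩

section Main

variable {p : ℕ} {G : Type*} [Group G] [Finite G]

theorem not_dvd_index_centralizer (hp : p.Prime) {N : Subgroup G} [N.Normal]
    (hN : Nat.card N = p) : ¬ p ∣ (centralizer (N : Set G)).index := by
  have : Fact p.Prime := ⟨hp⟩
  have : IsCyclic N := isCyclic_of_prime_card hN
  -- `G / C_G(N)` embeds in `Aut N`, of order `p - 1`.
  have key := card_dvd_of_injective _ (QuotientGroup.kerLift_injective N.normalizerMonoidHom)
  rw [normalizerMonoidHom_ker, ← index, ← relIndex, normalizer_eq_top, relIndex_top_right,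
    IsCyclic.card_mulAut, hN, Nat.totient_prime hp] at key
  have := hp.two_le
  exact fun hdvd ↦ absurd (Nat.le_of_dvd (by omega) (hdvd.trans key)) (by omega)

theorem exists_normal_isPNilpotent_of_quotient (hp : p.Prime) {N : Subgroup G} [N.Normal]
    (hN : Nat.card N = p ∨ ¬ p ∣ Nat.card N) {Cb : Subgroup (G ⧸ N)} [Cb.Normal]
    (hCbi : ¬ p ∣ Cb.index) (hCb : IsPNilpotent p Cb) :
    ∃ C : Subgroup G, C.Normal ∧ ¬ p ∣ C.index ∧ IsPNilpotent p C := by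
  set C' := Cb.comap (QuotientGroup.mk' N)
  have hC'i : ¬ p ∣ C'.index := by
    rwa [index_comap_of_surjective _ (QuotientGroup.mk'_surjective N)]
  rcases hN with hNp | hNp
  · refine ⟨centralizer N ⊓ C', inferInstance, ?_, ?_⟩
    · have hidx := relIndex_inf_mul_relIndex (centralizer (N : Set G)) C' ⊤
      rw [inf_top_eq, relIndex_top_right, relIndex_top_right] at hidx
      rw [← hidx]
      intro hd
      rcases hp.dvd_mul.mp hd with h | h
      · exact not_dvd_index_centralizer hp hNp (h.trans (relIndex_dvd_index_of_normal _ _))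
      · exact hC'i h
    · obtain ⟨f, hf⟩ := exists_ker_eq_subgroupOf (inf_le_right : centralizer N ⊓ C' ≤ C')
      refine hCb.of_ker_le_center hp f (hf ▸ fun x hx ↦ ?_) (hf ▸ ?_)
      · exact mem_center_iff.mpr fun y ↦
          Subtype.ext (mem_centralizer_iff.mp y.2.1 x hx).symm
      · exact (IsPGroup.of_card (n := 1) (by rw [pow_one, hNp])).comap_of_injective _
          (subtype_injective _)
  · obtain ⟨f, hf⟩ := exists_ker_eq_subgroupOf (le_refl C')
    refine ⟨C', inferInstance, hC'i, hCb.of_not_dvd_card_ker hp f (hf ▸ fun hd ↦ hNp ?_)⟩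
    exact hd.trans (card_comap_dvd_of_injective N _ C'.subtype_injective)

theorem IsPSupersolvable.exists_normal_isPNilpotent_not_dvd_index (hp : p.Prime)
    (hG : IsPSupersolvable p G) :
    ∃ C : Subgroup G, C.Normal ∧ ¬ p ∣ C.index ∧ IsPNilpotent p C := by
  induction h : Nat.card G using Nat.strong_induction_on generalizing G with
  | _ n ih =>
  rcases subsingleton_or_nontrivial G with _ | _
  · refine ⟨⊥, inferInstance, ?_, isPNilpotent_of_not_dvd_card ?_⟩
    · rw [index_bot, Nat.card_of_subsingleton (1 : G)]; exact hp.not_dvd_one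
    · rw [card_bot]; exact hp.not_dvd_one
  obtain ⟨N, hN⟩ := exists_isChiefFactor_bot (G := G)
  have : N.Normal := hN.2.1
  have hlt : Nat.card (G ⧸ N) < n := by
    rw [← index_eq_card, ← h, ← card_mul_index N]
    exact lt_mul_of_one_lt_left (Nat.pos_of_ne_zero N.index_ne_zero_of_finite)
      ((one_lt_card_iff_ne_bot N).mpr hN.2.2.1.ne')
  obtain ⟨Cb, _, hCbi, hCb⟩ :=
    ih _ hlt (hG.of_surjective (QuotientGroup.mk'_surjective N)) rfl
  have hcardN : factorCard ⊥ N = Nat.card N := by rw [factorCard, card_bot, Nat.div_one]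
  exact exists_normal_isPNilpotent_of_quotient hp
    ((em _).imp_left (hcardN ▸ hG.2 _ _ hN)) hCbi hCb

theorem sup_sylow_eq_of_le (hp : p.Prime) (P : Sylow p G) {H C : Subgroup G} (hHC : H ≤ C)
    (hH : ¬ p ∣ Nat.card H) {n : ℕ} (hn : H.relIndex C = p ^ n)
    (hPC : (P : Subgroup G) ≤ C) : H ⊔ P = C := by
  have : Fact p.Prime := ⟨hp⟩
  refine eq_of_le_of_card_ge (sup_le hHC hPC) ?_
  have hC : Nat.card H * p ^ n = Nat.card C := by
    rw [← hn, ← Nat.card_congr (subgroupOfEquivOfLe hHC).toEquiv]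
    exact card_mul_index _
  have hP : p ^ n ∣ Nat.card P :=
    P.pow_dvd_card_of_pow_dvd_card ((hC ▸ dvd_mul_left _ _).trans (card_subgroup_dvd_card C))
  obtain ⟨k, hk⟩ := P.isPGroup'.exists_card_eq
  have hcop : (Nat.card H).Coprime (Nat.card P) :=
    hk ▸ ((hp.coprime_iff_not_dvd).mpr hH).symm.pow_right k
  calc Nat.card C = Nat.card H * p ^ n := hC.symm
    _ ≤ Nat.card H * Nat.card P := Nat.mul_le_mul_left _ (Nat.le_of_dvd Nat.card_pos hP)
    _ ≤ Nat.card ↥(H ⊔ P) := Nat.le_of_dvd Nat.card_pos <|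
      hcop.mul_dvd_of_dvd_of_dvd (card_dvd_of_le le_sup_left) (card_dvd_of_le le_sup_right)

theorem isPNilpotent_of_isPNilpotent_normalizer (hp : p.Prime) (P : Sylow p G)
    {C : Subgroup G} [C.Normal] (hCi : ¬ p ∣ C.index) (hC : IsPNilpotent p C)
    (hnorm : IsPNilpotent p (normalizer (P : Set G))) : IsPNilpotent p G := by
  have : Fact p.Prime := ⟨hp⟩
  obtain ⟨H, _, hHC, hH, n, hn⟩ := hC.exists_normal_le hp
  have hPC : (P : Subgroup G) ≤ C := by
    obtain ⟨k, hk⟩ := P.isPGroup'.exists_card_eq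
    exact le_of_coprime_card_index (hk ▸ ((hp.coprime_iff_not_dvd).mpr hCi).pow_left k)
  have htop : H ⊔ normalizer P = ⊤ := by
    rw [eq_top_iff, ← P.normalizer_sup_eq_top' hPC, ← sup_sylow_eq_of_le hp P hHC hH hn hPC]
    exact sup_le le_sup_right (sup_le le_sup_left (le_normalizer.trans le_sup_right))
  have hsurj : Function.Surjective ((QuotientGroup.mk' H).comp (normalizer P).subtype) := by
    rw [← MonoidHom.range_eq_top, MonoidHom.range_comp, range_subtype, eq_top_iff,
      ← map_top_of_surjective _ (QuotientGroup.mk'_surjective H), ← htop, Subgroup.map_sup,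
      QuotientGroup.map_mk'_self, bot_sup_eq]
  exact (hnorm.of_surjective hp hsurj).of_not_dvd_card_ker hp (QuotientGroup.mk' H)
    (by rwa [QuotientGroup.ker_mk'])

end Main

/-- a p-supersolvable group with p-nilpotent Sylow normalizer is p-nilpotent. -/
theorem stmt1 (p : ℕ) (hp : p.Prime) (G : Type*) [Group G] [Finite G]
    (hG : IsPSupersolvable p G) (P : Sylow p G)
    (hnorm : IsPNilpotent p (Subgroup.normalizer (((P : Subgroup G) : Set G)))) :
    IsPNilpotent p G := by
  obtain ⟨C, _, hCi, hC⟩ := hG.exists_normal_isPNilpotent_not_dvd_index hp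
  exact isPNilpotent_of_isPNilpotent_normalizer hp P hCi hC hnorm
end

section
/- Every extraspecial 2-group of order at least 2^5 has a section (quotient of a subgroup) isomorphic to the quaternion group Q_8 of order 8. -/
open Subgroup Pointwise

open scoped commutatorElement

/-!
Squares and commutators of `E` lie in `Z(E) = {1, z}`: commutators by assumption, and squares
because `⁅g², h⁆ = ⁅g, h⁆² = 1` when `⁅g, h⁆` is central of order two. As `E` is not abelian,
some `x` has `x² = z`. If no `y` satisfied `y² = ⁅x, y⁆ = z`, every element outside the
centralizer `C` of `x`, a subgroup of index two, would be an involution. Then every involution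
of `C` commutes with all elements outside `C`, which generate `E`, so it is central; this forces
`C ≤ ⟨x⟩` and `|E| ≤ 8`. Hence such a `y` exists, and `x` and `y` generate a copy of `Q₈`.
-/

section Powers

variable {G : Type*} [Group G] {n : ℕ} [NeZero n] {x y : G}

theorem ZMod.pow_val_add (hx : x ^ n = 1) (i j : ZMod n) :
    x ^ (i + j).val = x ^ i.val * x ^ j.val := by
  rw [ZMod.val_add, ← pow_eq_pow_mod _ hx, pow_add]

theorem ZMod.pow_val_sub (hx : x ^ n = 1) (i j : ZMod n) :
    x ^ (j - i).val = (x ^ i.val)⁻¹ * x ^ j.val := by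
  rw [eq_inv_mul_iff_mul_eq, ← ZMod.pow_val_add hx, add_sub_cancel]

theorem pow_mul_eq_mul_inv_pow (hyx : y⁻¹ * x * y = x⁻¹) (k : ℕ) :
    x ^ k * y = y * (x ^ k)⁻¹ := by
  have h : y⁻¹ * x ^ k * y = (x ^ k)⁻¹ := by
    simpa only [inv_inv, hyx, inv_pow] using (conj_pow (a := y⁻¹) (b := x) (i := k)).symm
  rw [← h]
  group

theorem commute_of_sq_eq_one (hx : x ^ 2 = 1) (hy : y ^ 2 = 1) (hxy : (x * y) ^ 2 = 1) :
    Commute x y := by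
  rw [sq, mul_eq_one_iff_eq_inv] at hx hy hxy
  rw [Commute, SemiconjBy, hxy, mul_inv_rev, ← hx, ← hy]

end Powers

namespace QuaternionGroup

variable {G : Type*} [Group G] {n : ℕ} [NeZero n]

def lift (x y : G) (hx : x ^ (2 * n) = 1) (hy : y ^ 2 = x ^ n) (hyx : y⁻¹ * x * y = x⁻¹) :
    QuaternionGroup n →* G where
  toFun
    | a i => x ^ i.val
    | xa i => y * x ^ i.val
  map_one' := by
    show x ^ (0 : ZMod (2 * n)).val = 1
    rw [ZMod.val_zero, pow_zero]
  map_mul' := by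
    rintro (i | i) (j | j)
    · simp only [a_mul_a, ZMod.pow_val_add hx]
    · simp only [a_mul_xa, ZMod.pow_val_sub hx, ← mul_assoc, pow_mul_eq_mul_inv_pow hyx]
    · simp only [xa_mul_a, ZMod.pow_val_add hx, mul_assoc]
    · have hn : ((n : ZMod (2 * n))).val = n :=
        ZMod.val_natCast_of_lt (by have := NeZero.pos n; omega)
      simp only [xa_mul_xa, add_sub_assoc, ZMod.pow_val_add hx, ZMod.pow_val_sub hx, hn, ← hy]
      rw [mul_assoc y, ← mul_assoc _ y, pow_mul_eq_mul_inv_pow hyx, sq]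
      group

theorem injective_of_map_ne_one {f : QuaternionGroup 2 →* G} (hf : f (a 2) ≠ 1) :
    Function.Injective f := by
  have h : ∀ g : QuaternionGroup 2, g = 1 ∨ g = a 2 ∨ g ^ 2 = a 2 := by decide
  refine (injective_iff_map_eq_one f).mpr fun g hg => ?_
  rcases h g with h | h | h
  · exact h
  · exact absurd (h ▸ hg) hf
  · exact absurd (by rw [← h, map_pow, hg, one_pow]) hf

end QuaternionGroup

theorem not_quaternionFree_of_injective {G : Type*} [Group G] {f : QuaternionGroup 2 →* G}
    (hf : Function.Injective f) : ¬ QuaternionFree G := fun h =>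
  (h f.range ⊥).false (QuotientGroup.quotientBot.trans (MonoidHom.ofInjective hf).symm)

section CentralCommutators

variable {G : Type*} [Group G]

theorem commutatorElement_mem_center (hc : commutator G ≤ center G) (g h : G) :
    ⁅g, h⁆ ∈ center G :=
  hc (commutator_def G ▸ commutator_mem_commutator (mem_top g) (mem_top h))

theorem commutatorElement_mul_right_of_le_center (hc : commutator G ≤ center G) (g a b : G) :
    ⁅g, a * b⁆ = ⁅g, a⁆ * ⁅g, b⁆ := by
  rw [commutatorElement_mul_right_eq_mul_conj, mul_assoc _ a,
    ← (commutatorElement_mem_center hc g b).comm a, ← mul_assoc, mul_inv_cancel_right]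

theorem commutatorElement_sq_left_of_le_center (hc : commutator G ≤ center G) (g h : G) :
    ⁅g ^ 2, h⁆ = ⁅g, h⁆ ^ 2 := by
  rw [sq, commutatorElement_mul_left_eq_conj_mul, ← (commutatorElement_mem_center hc g h).comm g,
    mul_inv_cancel_right, sq]

theorem sq_eq_one_of_mem_center (hZ : Nat.card (center G) = 2) {c : G} (hc : c ∈ center G) :
    c ^ 2 = 1 := by
  have h := pow_card_eq_one' (x := (⟨c, hc⟩ : center G))
  rw [hZ] at h
  exact congrArg Subtype.val h

theorem sq_mem_center (hc : commutator G ≤ center G) (hZ : Nat.card (center G) = 2) (g : G) :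
    g ^ 2 ∈ center G := by
  refine mem_center_iff.mpr fun h => (commutatorElement_eq_one_iff_mul_comm.mp ?_).symm
  rw [commutatorElement_sq_left_of_le_center hc,
    sq_eq_one_of_mem_center hZ (commutatorElement_mem_center hc g h)]

theorem pow_four_eq_one (hc : commutator G ≤ center G) (hZ : Nat.card (center G) = 2) (g : G) :
    g ^ 4 = 1 := by
  rw [show 4 = 2 * 2 from rfl, pow_mul]
  exact sq_eq_one_of_mem_center hZ (sq_mem_center hc hZ g)

theorem eq_one_or_eq_of_mem_center (hZ : Nat.card (center G) = 2) {z : G} (hz : z ∈ center G)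
    (hz1 : z ≠ 1) {c : G} (hc : c ∈ center G) : c = 1 ∨ c = z := by
  obtain ⟨w, -, hw⟩ := (Nat.card_eq_two_iff' (1 : center G)).mp hZ
  by_contra! h
  have := (hw ⟨c, hc⟩ (by simpa [Subtype.ext_iff] using h.1)).trans
    (hw ⟨z, hz⟩ (by simpa [Subtype.ext_iff] using hz1)).symm
  exact h.2 (congrArg Subtype.val this)

theorem exists_sq_ne_one (hZ : Nat.card (center G) = 2) (hG : 2 < Nat.card G) :
    ∃ x : G, x ^ 2 ≠ 1 := by
  by_contra! h
  have : center G = ⊤ := eq_top_iff.mpr fun g _ => mem_center_iff.mpr fun h' =>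
    (Commute.of_orderOf_dvd_two (fun g => orderOf_dvd_of_pow_eq_one (h g)) h' g).eq
  rw [this, card_top] at hZ
  omega

def commutatorElementHom (hc : commutator G ≤ center G) (x : G) : G →* center G where
  toFun g := ⟨⁅x, g⁆, commutatorElement_mem_center hc x g⟩
  map_one' := Subtype.ext (commutatorElement_one_right x)
  map_mul' a b := Subtype.ext (commutatorElement_mul_right_of_le_center hc x a b)

theorem mem_ker_commutatorElementHom {hc : commutator G ≤ center G} {x g : G} :
    g ∈ (commutatorElementHom hc x).ker ↔ ⁅x, g⁆ = 1 := by
  simp [MonoidHom.mem_ker, commutatorElementHom, Subtype.ext_iff]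

theorem card_le_two_mul_card_ker_commutatorElementHom (hc : commutator G ≤ center G)
    (hZ : Nat.card (center G) = 2) (x : G) :
    Nat.card G ≤ 2 * Nat.card (commutatorElementHom hc x).ker := by
  rw [← card_mul_index (commutatorElementHom hc x).ker, index_ker, mul_comm, ← hZ]
  have : Finite (center G) := Nat.finite_of_card_ne_zero (by omega)
  gcongr
  exact card_le_card_group _

theorem mem_center_of_forall_sq_eq_one (hc : commutator G ≤ center G) {x t c : G}
    (hout : ∀ w : G, ⁅x, w⁆ ≠ 1 → w ^ 2 = 1) (ht : ⁅x, t⁆ ≠ 1) (hcx : ⁅x, c⁆ = 1)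
    (hc2 : c ^ 2 = 1) : c ∈ center G := by
  have hw (w : G) (hw : ⁅x, w⁆ ≠ 1) : Commute c w := by
    refine commute_of_sq_eq_one hc2 (hout w hw) (hout _ ?_)
    rwa [commutatorElement_mul_right_of_le_center hc, hcx, one_mul]
  refine mem_center_iff.mpr fun g => (?_ : Commute c g).symm.eq
  by_cases hg : ⁅x, g⁆ = 1
  -- `g = t⁻¹ * (t * g)`, where `t` and `t * g` do not commute with `x`
  · have htg : ⁅x, t * g⁆ ≠ 1 := by
      rwa [commutatorElement_mul_right_of_le_center hc, hg, mul_one]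
    simpa using (hw t ht).inv_right.mul_right (hw _ htg)
  · exact hw g hg

theorem exists_sq_eq_and_commutatorElement_eq [Finite G] (hc : commutator G ≤ center G)
    (hZ : Nat.card (center G) = 2) (hG : 8 < Nat.card G) {x : G} (hx : x ^ 2 ≠ 1) :
    ∃ y : G, y ^ 2 = x ^ 2 ∧ ⁅x, y⁆ = x ^ 2 := by
  by_contra! hno
  have hcases {c : G} : c ∈ center G → c = 1 ∨ c = x ^ 2 :=
    eq_one_or_eq_of_mem_center hZ (sq_mem_center hc hZ x) hx
  have hsq (g : G) := hcases (sq_mem_center hc hZ g)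
  have hout (w : G) (hw : ⁅x, w⁆ ≠ 1) : w ^ 2 = 1 := (hsq w).resolve_right fun h =>
    hno w h ((hcases (commutatorElement_mem_center hc x w)).resolve_left hw)
  have hZx {c : G} (h : c ∈ center G) : c ∈ zpowers x := by
    rcases hcases h with rfl | rfl
    exacts [one_mem _, pow_mem (mem_zpowers x) 2]
  obtain ⟨t, ht⟩ : ∃ t : G, ⁅x, t⁆ ≠ 1 := by
    by_contra! h
    have hxZ : x ∈ center G :=
      mem_center_iff.mpr fun g => (commutatorElement_eq_one_iff_mul_comm.mp (h g)).symm
    have : x = 1 := (hcases hxZ).elim id fun h1 => mul_eq_right.mp (h1.trans (sq x)).symm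
    exact hx (by rw [this, one_pow])
  have hker : (commutatorElementHom hc x).ker ≤ zpowers x := by
    intro c hcx
    rw [mem_ker_commutatorElementHom] at hcx
    rcases hsq c with hc2 | hc2
    · exact hZx (mem_center_of_forall_sq_eq_one hc hout ht hcx hc2)
    · have hxc : (x * c) ^ 2 = 1 := by
        rw [(commutatorElement_eq_one_iff_commute.mp hcx).mul_pow, hc2, ← pow_add]
        exact pow_four_eq_one hc hZ x
      have hxcx : ⁅x, x * c⁆ = 1 := by
        rw [commutatorElement_mul_right_of_le_center hc, commutatorElement_self, hcx, one_mul]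
      simpa using mul_mem (inv_mem (mem_zpowers x))
        (hZx (mem_center_of_forall_sq_eq_one hc hout ht hxcx hxc))
  have := calc Nat.card G ≤ 2 * Nat.card (commutatorElementHom hc x).ker :=
        card_le_two_mul_card_ker_commutatorElementHom hc hZ x
    _ ≤ 2 * Nat.card (zpowers x) := by gcongr; exact card_le_of_le hker
    _ ≤ 2 * 4 := by
        rw [Nat.card_zpowers]
        gcongr
        exact orderOf_le_of_pow_eq_one (by norm_num) (pow_four_eq_one hc hZ x)
  omega

end CentralCommutators

theorem stmt4_general (E : Type*) [Group E] [Finite E]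
    (hZC : Subgroup.center E = commutator E)
    (hZ2 : Nat.card (Subgroup.center E) = 2) (hbig : 2 ^ 5 ≤ Nat.card E) :
    ¬ QuaternionFree E := by
  have hc : commutator E ≤ center E := hZC.ge
  obtain ⟨x, hx⟩ := exists_sq_ne_one hZ2 (by omega)
  obtain ⟨y, hy, hxy⟩ := exists_sq_eq_and_commutatorElement_eq hc hZ2 (by omega) hx
  have hyx : y⁻¹ * x * y = x⁻¹ := by
    rw [commutatorElement_def, sq, mul_assoc x, mul_assoc x, mul_right_inj] at hxy
    conv_lhs => rw [← hxy]
    group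
  let f := QuaternionGroup.lift x y (pow_four_eq_one hc hZ2 x) hy hyx
  exact not_quaternionFree_of_injective (QuaternionGroup.injective_of_map_ne_one (f := f) hx)

/-- every extraspecial 2-group of order at least `2^5` has a section
isomorphic to `Q₈`, i.e. it is not quaternion-free. -/
theorem stmt4 (E : Type*) [Group E] [Finite E] (h2 : IsPGroup 2 E)
    (hZC : Subgroup.center E = commutator E) (hZF : Subgroup.center E = frattini E)
    (hZ2 : Nat.card (Subgroup.center E) = 2) (hbig : 2 ^ 5 ≤ Nat.card E) :
    ¬ QuaternionFree E :=
  stmt4_general E hZC hZ2 hbig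
end

section
/- If P is a non-abelian group of order 8 and P/Φ(P) is a chief factor of a group L with P ⊴ L acting irreducibly on P/Φ(P), then P is isomorphic to the quaternion group Q_8 (in particular P is not dihedral). -/
open Subgroup Pointwise

section AuxStmt5
open Subgroup


private lemma aux_pow_lt {G : Type*} [Group G] {x z : G} (hx : orderOf x = 4)
    (hz : z ∈ zpowers x) : ∃ n : ℕ, n < 4 ∧ z = x ^ n := by
  obtain ⟨k, hk⟩ := mem_zpowers_iff.mp hz
  have h0 : 0 ≤ k % 4 := Int.emod_nonneg k (by norm_num)
  have h1 : k % 4 < 4 := Int.emod_lt_of_pos k (by norm_num)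
  refine ⟨(k % 4).toNat, by omega, ?_⟩
  have h4 : x ^ (4:ℕ) = 1 := by rw [← hx]; exact pow_orderOf_eq_one x
  have hq : x ^ ((4:ℤ) * (k / 4)) = 1 := by
    rw [zpow_mul, show ((4:ℤ)) = ((4:ℕ):ℤ) by norm_num, zpow_natCast, h4, one_zpow]
  have h2 : x ^ (((k % 4).toNat : ℤ)) = x ^ k := by
    rw [Int.toNat_of_nonneg h0]
    calc x ^ (k % 4) = x ^ (k % 4) * x ^ ((4:ℤ) * (k / 4)) := by rw [hq, mul_one]
      _ = x ^ (k % 4 + 4 * (k / 4)) := (zpow_add x _ _).symm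
      _ = x ^ k := by rw [Int.emod_add_mul_ediv k 4]
  rw [← hk, ← h2, zpow_natCast]

private lemma aux_not_comm {G : Type*} [Group G] [Finite G] (h8 : Nat.card G = 8)
    (hna : ∃ a b : G, a * b ≠ b * a) {x y : G} (hx : orderOf x = 4)
    (hy : y ∉ zpowers x) (hcomm : x * y = y * x) : False := by
  have hxK : x ∈ closure ({x, y} : Set G) := subset_closure (by simp)
  have hyK : y ∈ closure ({x, y} : Set G) := subset_closure (by simp)
  have hHK : zpowers x ≤ closure ({x, y} : Set G) := zpowers_le.mpr hxK
  have hcK : Nat.card (closure ({x, y} : Set G)) ∣ 8 := h8 ▸ card_subgroup_dvd_card _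
  have hHc : (4:ℕ) ∣ Nat.card (closure ({x, y} : Set G)) := by
    have := card_dvd_of_le hHK
    rwa [Nat.card_zpowers, hx] at this
  have hle : Nat.card (closure ({x, y} : Set G)) ≤ 8 := Nat.le_of_dvd (by norm_num) hcK
  have hcase : Nat.card (closure ({x, y} : Set G)) = 4 ∨
      Nat.card (closure ({x, y} : Set G)) = 8 := by
    interval_cases h : (Nat.card (closure ({x, y} : Set G))) <;> omega
  have hKtop : closure ({x, y} : Set G) = ⊤ := by
    rcases hcase with h | h
    · exfalso; apply hy
      have heq : zpowers x = closure ({x, y} : Set G) :=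
        Subgroup.eq_of_le_of_card_ge hHK (by rw [Nat.card_zpowers, hx, h])
      rw [heq]; exact hyK
    · exact Subgroup.eq_top_of_card_eq _ (h.trans h8.symm)
  have hcen : closure ({x, y} : Set G) ≤ centralizer {x, y} := by
    rw [closure_le]
    intro g hg
    rcases hg with rfl | hg
    · refine mem_centralizer_iff.mpr ?_
      rintro s (rfl | rfl)
      · rfl
      · exact hcomm.symm
    · rw [Set.mem_singleton_iff] at hg; subst hg
      refine mem_centralizer_iff.mpr ?_
      rintro s (rfl | rfl)
      · exact hcomm
      · rfl
  have hcen2 : ∀ g : G, g ∈ centralizer {x, y} := fun g => hcen (by rw [hKtop]; trivial)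
  have hxc : x ∈ Subgroup.center G := Subgroup.mem_center_iff.mpr
    (fun g => ((mem_centralizer_iff.mp (hcen2 g)) x (by simp)).symm)
  have hyc : y ∈ Subgroup.center G := Subgroup.mem_center_iff.mpr
    (fun g => ((mem_centralizer_iff.mp (hcen2 g)) y (by simp)).symm)
  have hcent : closure ({x, y} : Set G) ≤ Subgroup.center G := by
    rw [closure_le]
    rintro g (rfl | hg)
    · exact hxc
    · rw [Set.mem_singleton_iff] at hg; subst hg; exact hyc
  obtain ⟨a, b, hab⟩ := hna
  exact hab (Subgroup.mem_center_iff.mp (hcent (by rw [hKtop]; trivial)) b).symm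

private lemma aux_conj_inv {G : Type*} [Group G] [Finite G] (h8 : Nat.card G = 8)
    (hna : ∃ a b : G, a * b ≠ b * a) {x : G} (hx : orderOf x = 4)
    {y : G} (hy : y ∉ zpowers x) : y * x * y⁻¹ = x⁻¹ := by
  have hH4 : Nat.card (zpowers x) = 4 := by rw [Nat.card_zpowers, hx]
  have hidx : (zpowers x).index = 2 := by
    have := Subgroup.card_mul_index (zpowers x)
    rw [hH4, h8] at this; omega
  have hxH : x ∈ zpowers x := mem_zpowers x
  have h1 : y * x ∉ zpowers x := by
    rw [Subgroup.mul_mem_iff_of_index_two hidx]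
    simp [hxH, hy]
  have h2 : y * x * y⁻¹ ∈ zpowers x := by
    rw [Subgroup.mul_mem_iff_of_index_two hidx]
    simp [h1, hy]
  have horder : orderOf (y * x * y⁻¹) = 4 := by
    have := orderOf_injective (MulAut.conj y).toMonoidHom (MulEquiv.injective _) x
    simp only [MulEquiv.coe_toMonoidHom, MulAut.conj_apply] at this
    rw [this, hx]
  have h4 : x ^ 4 = 1 := by rw [← hx]; exact pow_orderOf_eq_one x
  obtain ⟨n, hn4, hzn⟩ := aux_pow_lt hx h2
  interval_cases n
  · rw [pow_zero] at hzn; rw [hzn] at horder; simp at horder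
  · exfalso
    refine aux_not_comm h8 hna hx hy ?_
    rw [pow_one] at hzn
    calc x * y = (y * x * y⁻¹) * y := by rw [hzn]
      _ = y * x := by group
  · exfalso
    have hsq : (y * x * y⁻¹) ^ 2 = 1 := by
      rw [hzn, ← pow_mul]
      norm_num
      exact h4
    have := orderOf_dvd_iff_pow_eq_one.mpr hsq
    rw [horder] at this; omega
  · rw [hzn]
    have : x ^ 3 * x = 1 := by rw [← pow_succ]; exact h4
    exact eq_inv_of_mul_eq_one_left this


private lemma aux_exists_x4 {G : Type*} [Group G] [Finite G] (h8 : Nat.card G = 8)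
    (hna : ∃ a b : G, a * b ≠ b * a) : ∃ x : G, orderOf x = 4 := by
  have hg2 : ∃ g : G, g ^ 2 ≠ 1 := by
    by_contra h
    push_neg at h
    obtain ⟨a, b, hab⟩ := hna
    have hinv : ∀ g : G, g⁻¹ = g := by
      intro g
      apply inv_eq_of_mul_eq_one_left
      rw [← pow_two]
      exact h g
    apply hab
    calc a * b = (a * b)⁻¹ := (hinv _).symm
      _ = b⁻¹ * a⁻¹ := mul_inv_rev a b
      _ = b * a := by rw [hinv, hinv]
  obtain ⟨g, hg⟩ := hg2
  have hdvd : orderOf g ∣ 8 := h8 ▸ orderOf_dvd_natCard g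
  obtain ⟨k, hk3, hko⟩ := (Nat.dvd_prime_pow Nat.prime_two).mp
    (show orderOf g ∣ 2 ^ 3 from hdvd)
  interval_cases k
  · rw [pow_zero, orderOf_eq_one_iff] at hko
    exact absurd (by rw [hko, one_pow]) hg
  · exfalso
    apply hg
    rw [show (2:ℕ) = 2 ^ 1 by norm_num, ← hko]
    exact pow_orderOf_eq_one g
  · exact ⟨g, by rw [hko]; norm_num⟩
  · refine ⟨g ^ 2, ?_⟩
    rw [orderOf_pow, hko]
    norm_num [Nat.gcd]

private lemma aux_conj_pow_inv {G : Type*} [Group G] {x y : G} (hconj : y * x * y⁻¹ = x⁻¹)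
    (n : ℕ) : y * x ^ n * y⁻¹ = (x ^ n)⁻¹ := by
  calc y * x ^ n * y⁻¹ = (y * x * y⁻¹) ^ n := conj_pow.symm
    _ = (x⁻¹) ^ n := by rw [hconj]
    _ = (x ^ n)⁻¹ := inv_pow x n


private lemma quat_aux {G : Type*} [Group G] [Finite G] (h8 : Nat.card G = 8)
    {x y : G} (hx : orderOf x = 4) (hy : y ∉ zpowers x)
    (hy2 : y ^ 2 = x ^ 2) (hconj : y * x * y⁻¹ = x⁻¹) :
    Nonempty (G ≃* QuaternionGroup 2) := by
  have h4 : x ^ (4:ℕ) = 1 := by rw [← hx]; exact pow_orderOf_eq_one x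
  have hmod : ∀ m : ℕ, x ^ (m % 4) = x ^ m := by
    intro m
    conv_rhs => rw [← Nat.div_add_mod m 4]
    rw [pow_add, pow_mul, h4, one_pow, one_mul]
  have he : ∀ i j : ZMod 4, x ^ (i + j).val = x ^ i.val * x ^ j.val := by
    intro i j
    rw [ZMod.val_add, hmod, pow_add]
  have hneg : ∀ i : ZMod 4, x ^ (-i).val = (x ^ i.val)⁻¹ := by
    intro i
    have h := he i (-i)
    rw [add_neg_cancel, show ((0 : ZMod 4)).val = 0 from rfl, pow_zero] at h
    exact (inv_eq_of_mul_eq_one_right h.symm).symm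
  have hyx : ∀ n : ℕ, y * x ^ n = (x ^ n)⁻¹ * y := by
    intro n
    have h1 : y * x ^ n * y⁻¹ = (x ^ n)⁻¹ := by
      calc y * x ^ n * y⁻¹ = (y * x * y⁻¹) ^ n := conj_pow.symm
        _ = (x⁻¹) ^ n := by rw [hconj]
        _ = (x ^ n)⁻¹ := inv_pow x n
    calc y * x ^ n = (y * x ^ n * y⁻¹) * y := by group
      _ = (x ^ n)⁻¹ * y := by rw [h1]
  have hyx' : ∀ n : ℕ, y * (x ^ n)⁻¹ = x ^ n * y := by
    intro n
    calc y * (x ^ n)⁻¹ = x ^ n * ((x ^ n)⁻¹ * y) * (x ^ n)⁻¹ := by group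
      _ = x ^ n * (y * x ^ n) * (x ^ n)⁻¹ := by rw [← hyx n]
      _ = x ^ n * y := by group
  have hcm : ∀ a b : ℕ, Commute (x ^ a) (x ^ b) := fun a b => (Commute.refl x).pow_pow a b
  let f : QuaternionGroup 2 → G := fun q =>
    match q with
    | QuaternionGroup.a i => x ^ i.val
    | QuaternionGroup.xa i => (x ^ i.val)⁻¹ * y
  have hmul : ∀ p q : QuaternionGroup 2, f (p * q) = f p * f q := by
    rintro (i | i) (j | j)
    · exact he i j
    · show (x ^ (j - i).val)⁻¹ * y = x ^ i.val * ((x ^ j.val)⁻¹ * y)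
      have h1 : x ^ (j - i).val = x ^ j.val * (x ^ i.val)⁻¹ := by
        rw [sub_eq_add_neg, he, hneg]
      rw [h1, mul_inv_rev, inv_inv, ← mul_assoc]
    · show (x ^ (i + j).val)⁻¹ * y = (x ^ i.val)⁻¹ * y * x ^ j.val
      rw [mul_assoc, hyx j.val, he i j, mul_inv_rev, ← mul_assoc,
        ((hcm j.val i.val).inv_inv).eq]
    · show x ^ ((2 : ZMod (2*2)) + j - i).val = (x ^ i.val)⁻¹ * y * ((x ^ j.val)⁻¹ * y)
      have h2v : ((2 : ZMod (2*2))).val = 2 := rfl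
      have hL : x ^ ((2 : ZMod (2*2)) + j - i).val
          = x ^ 2 * x ^ j.val * (x ^ i.val)⁻¹ := by
        rw [sub_eq_add_neg, he, hneg, he, h2v]
      have hyy : y * y = x ^ 2 := by rw [← hy2]; exact (pow_two y).symm
      have hR : (x ^ i.val)⁻¹ * y * ((x ^ j.val)⁻¹ * y)
          = (x ^ i.val)⁻¹ * (x ^ 2 * x ^ j.val) := by
        calc (x ^ i.val)⁻¹ * y * ((x ^ j.val)⁻¹ * y)
            = (x ^ i.val)⁻¹ * (y * (x ^ j.val)⁻¹) * y := by group
          _ = (x ^ i.val)⁻¹ * (x ^ j.val * y) * y := by rw [hyx' j.val]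
          _ = (x ^ i.val)⁻¹ * (x ^ j.val * (y * y)) := by group
          _ = (x ^ i.val)⁻¹ * (x ^ j.val * x ^ 2) := by rw [hyy]
          _ = (x ^ i.val)⁻¹ * (x ^ 2 * x ^ j.val) := by rw [(hcm j.val 2).eq]
      rw [hL, hR]
      exact (((hcm 2 i.val).mul_left (hcm j.val i.val)).inv_right).eq
  let φ : QuaternionGroup 2 →* G := MonoidHom.mk' f hmul
  have hinj : Function.Injective φ := by
    rw [injective_iff_map_eq_one]
    rintro (i | i) h
    · have hdvd : (4:ℕ) ∣ i.val := by
        rw [← hx]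
        exact orderOf_dvd_iff_pow_eq_one.mpr h
      have hlt : i.val < 4 := i.val_lt
      have h0 : i.val = 0 := by omega
      have : i = 0 := (ZMod.val_eq_zero i).mp h0
      rw [this]
      rfl
    · exfalso
      apply hy
      have h1 : x ^ i.val = y := inv_mul_eq_one.mp h
      rw [← h1]
      exact (zpowers x).pow_mem (mem_zpowers x) i.val
  have hcards : Nat.card (QuaternionGroup 2) = Nat.card G := by
    rw [h8, Nat.card_eq_fintype_card, QuaternionGroup.card]
  exact ⟨(MulEquiv.ofBijective φ
    ((Nat.bijective_iff_injective_and_card φ).mpr ⟨hinj, hcards⟩)).symm⟩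

private lemma aux_stmt5_main {L : Type*} [Group L] [Finite L] (P : Subgroup L)
    (hcard : Nat.card P = 8) (hna : ∃ a b : P, a * b ≠ b * a)
    (hchief : (((frattini P).map P.subtype).Normal) ∧ P.Normal ∧
      ((frattini P).map P.subtype < P) ∧
      ∀ N : Subgroup L, N.Normal → (frattini P).map P.subtype ≤ N → N ≤ P →
        N = (frattini P).map P.subtype ∨ N = P) :
    ∃ y x : ↥P, orderOf x = 4 ∧ y ∉ zpowers x ∧ y ^ 2 = x ^ 2 := by
  obtain ⟨hAnorm, hPnorm, hAB, hmin⟩ := hchief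
  obtain ⟨x, hx⟩ := aux_exists_x4 hcard hna
  have hH4 : Nat.card (zpowers x) = 4 := by rw [Nat.card_zpowers, hx]
  have hidx : (zpowers x).index = 2 := by
    have := Subgroup.card_mul_index (zpowers x)
    rw [hH4, hcard] at this; omega
  have key : ∃ y : ↥P, y ∉ zpowers x ∧ y ^ 2 = x ^ 2 := by
    by_contra hno
    push_neg at hno
    have hsq : ∀ y : ↥P, y ∉ zpowers x → y ^ 2 = 1 := by
      intro y hy
      have hmem : y ^ 2 ∈ zpowers x := Subgroup.sq_mem_of_index_two hidx y
      obtain ⟨n, hn4, hzn⟩ := aux_pow_lt hx hmem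
      have hcj : y * x * y⁻¹ = x⁻¹ := aux_conj_inv hcard hna hx hy
      have h1 : y * x ^ n * y⁻¹ = (x ^ n)⁻¹ := aux_conj_pow_inv hcj n
      have h2 : y * x ^ n * y⁻¹ = x ^ n := by
        rw [← hzn]
        group
      have hxx : x ^ n = (x ^ n)⁻¹ := h2.symm.trans h1
      have h3 : x ^ (n + n) = 1 := by
        rw [pow_add]
        nth_rewrite 2 [hxx]
        exact mul_inv_cancel _
      have hdvd : (4:ℕ) ∣ (n + n) := by
        rw [← hx]
        exact orderOf_dvd_iff_pow_eq_one.mpr h3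
      interval_cases n
      · simpa using hzn
      · omega
      · exact absurd hzn (hno y hy)
      · omega
    have h4mem : ∀ g : ↥P, orderOf g = 4 → g ∈ zpowers x := by
      intro g hg
      by_contra hgH
      have h1 := orderOf_dvd_iff_pow_eq_one.mpr (hsq g hgH)
      rw [hg] at h1
      omega
    set C : Subgroup L := (zpowers x).map P.subtype with hC
    have hCnorm : C.Normal := by
      constructor
      intro c hc l
      obtain ⟨h, hh, hhc⟩ := Subgroup.mem_map.mp hc
      obtain ⟨k, hk⟩ := mem_zpowers_iff.mp hh
      have hqmem : l * (↑x) * l⁻¹ ∈ P := hPnorm.conj_mem ↑x x.2 l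
      have hq4 : orderOf (⟨l * ↑x * l⁻¹, hqmem⟩ : ↥P) = 4 := by
        have h1 : orderOf (l * (↑x:L) * l⁻¹) = orderOf (↑x:L) := by
          have h0 := orderOf_injective (MulAut.conj l).toMonoidHom
            (MulEquiv.injective _) (↑x:L)
          simp only [MulEquiv.coe_toMonoidHom, MulAut.conj_apply] at h0
          exact h0
        have h2 : orderOf (↑x:L) = orderOf x :=
          orderOf_injective P.subtype P.subtype_injective x
        have h3 : orderOf (⟨l * ↑x * l⁻¹, hqmem⟩ : ↥P)
            = orderOf (l * (↑x:L) * l⁻¹) :=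
          (orderOf_injective P.subtype P.subtype_injective _).symm
        rw [h3, h1, h2, hx]
      have hqH : (⟨l * ↑x * l⁻¹, hqmem⟩ : ↥P) ∈ zpowers x := h4mem _ hq4
      refine Subgroup.mem_map.mpr
        ⟨(⟨l * ↑x * l⁻¹, hqmem⟩ : ↥P) ^ k, (zpowers x).zpow_mem hqH k, ?_⟩
      rw [map_zpow]
      show (l * (↑x:L) * l⁻¹) ^ k = l * c * l⁻¹
      rw [conj_zpow]
      have hxc : ((↑x:L)) ^ k = c := by
        rw [← hhc, ← hk]
        exact (map_zpow P.subtype x k).symm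
      rw [hxc]
    have hfH : frattini (↥P) ≤ zpowers x := by
      apply frattini_le_coatom
      constructor
      · intro htop
        have hcc : Nat.card (zpowers x) = Nat.card ↥P := by
          rw [htop]
          exact Subgroup.card_top
        rw [hH4, hcard] at hcc
        omega
      · intro K hK
        have h4d : (4:ℕ) ∣ Nat.card K := hH4 ▸ card_dvd_of_le hK.le
        have h8d : Nat.card K ∣ 8 := hcard ▸ card_subgroup_dvd_card K
        have hle8 : Nat.card K ≤ 8 := Nat.le_of_dvd (by norm_num) h8d
        have hcase : Nat.card K = 4 ∨ Nat.card K = 8 := by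
          interval_cases h : (Nat.card K) <;> omega
        rcases hcase with h | h
        · exfalso
          have heq : zpowers x = K :=
            Subgroup.eq_of_le_of_card_ge hK.le (by rw [hH4, h])
          exact hK.ne heq
        · exact Subgroup.eq_top_of_card_eq _ (h.trans hcard.symm)
    have hAC : (frattini ↥P).map P.subtype ≤ C := Subgroup.map_mono hfH
    have hCP : C ≤ P := Subgroup.map_subtype_le _
    have hcardC : Nat.card C = 4 := by
      rw [← hH4]
      exact (Nat.card_congr
        ((Subgroup.equivMapOfInjective _ _ P.subtype_injective).toEquiv)).symm
    rcases hmin C hCnorm hAC hCP with h | h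
    · have hfeq : zpowers x = frattini ↥P :=
        Subgroup.map_injective P.subtype_injective h
      have hyex : ∃ y : ↥P, y ∉ zpowers x := by
        by_contra hall
        push_neg at hall
        have htop : zpowers x = ⊤ := by
          rw [eq_top_iff']
          exact hall
        have hcc : Nat.card (zpowers x) = Nat.card ↥P := by
          rw [htop]; exact Subgroup.card_top
        rw [hH4, hcard] at hcc
        omega
      obtain ⟨y, hy⟩ := hyex
      have hJ : zpowers y ⊔ zpowers x = ⊤ := by
        have hle' : zpowers x ≤ zpowers y ⊔ zpowers x := le_sup_right
        have h4d : (4:ℕ) ∣ Nat.card (zpowers y ⊔ zpowers x : Subgroup ↥P) :=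
          hH4 ▸ card_dvd_of_le hle'
        have h8d : Nat.card (zpowers y ⊔ zpowers x : Subgroup ↥P) ∣ 8 :=
          hcard ▸ card_subgroup_dvd_card _
        have hle8 : Nat.card (zpowers y ⊔ zpowers x : Subgroup ↥P) ≤ 8 :=
          Nat.le_of_dvd (by norm_num) h8d
        have hcase : Nat.card (zpowers y ⊔ zpowers x : Subgroup ↥P) = 4 ∨
            Nat.card (zpowers y ⊔ zpowers x : Subgroup ↥P) = 8 := by
          interval_cases h : (Nat.card (zpowers y ⊔ zpowers x : Subgroup ↥P)) <;> omega
        rcases hcase with hc | hc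
        · exfalso
          apply hy
          have heq : zpowers x = zpowers y ⊔ zpowers x :=
            Subgroup.eq_of_le_of_card_ge hle' (by rw [hH4, hc])
          rw [heq]
          exact Subgroup.mem_sup_left (mem_zpowers y)
        · exact Subgroup.eq_top_of_card_eq _ (hc.trans hcard.symm)
      have hytop : zpowers y = ⊤ := frattini_nongenerating (by rw [← hfeq]; exact hJ)
      have hy8 : Nat.card (zpowers y) = 8 := by
        rw [hytop, ← hcard]; exact Subgroup.card_top
      rw [Nat.card_zpowers] at hy8
      have hy2 := orderOf_dvd_iff_pow_eq_one.mpr (hsq y hy)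
      rw [hy8] at hy2
      omega
    · exfalso
      have hcc : Nat.card C = Nat.card ↥P := by rw [h]
      rw [hcardC, hcard] at hcc
      omega
  obtain ⟨y, hyH, hy2⟩ := key
  exact ⟨y, x, hx, hyH, hy2⟩

end AuxStmt5

/-- if `P ⊴ L` is a non-abelian group of order 8 and `P/Φ(P)` is a chief
factor of `L`, then `P ≅ Q₈`; in particular `P` is not dihedral. -/
theorem stmt5 (L : Type*) [Group L] [Finite L] (P : Subgroup L)
    (hcard : Nat.card P = 8) (hna : ∃ a b : P, a * b ≠ b * a)
    (hchief : IsChiefFactor L ((frattini P).map P.subtype) P) :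
    Nonempty (P ≃* QuaternionGroup 2) ∧ IsEmpty (P ≃* DihedralGroup 4) := by
  obtain ⟨y, x, hx, hyH, hy2⟩ := aux_stmt5_main P hcard hna hchief
  have hconj : y * x * y⁻¹ = x⁻¹ := aux_conj_inv hcard hna hx hyH
  obtain ⟨e⟩ := quat_aux hcard hx hyH hy2 hconj
  refine ⟨⟨e⟩, ⟨fun d => ?_⟩⟩
  have E : QuaternionGroup 2 ≃* DihedralGroup 4 := e.symm.trans d
  have hiff : ∀ g : QuaternionGroup 2, g ^ 2 = 1 ↔ (E g) ^ 2 = 1 := by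
    intro g
    rw [← map_pow]
    exact (EmbeddingLike.map_eq_one_iff).symm
  have hcardeq : Fintype.card {g : QuaternionGroup 2 // g ^ 2 = 1}
      = Fintype.card {g : DihedralGroup 4 // g ^ 2 = 1} :=
    Fintype.card_congr (E.toEquiv.subtypeEquiv hiff)
  have hq : Fintype.card {g : QuaternionGroup 2 // g ^ 2 = 1} = 2 := by decide
  have hd : Fintype.card {g : DihedralGroup 4 // g ^ 2 = 1} = 6 := by decide
  omega
end

section
/- Let G = S_4, the symmetric group of degree 4, and let P be a Sylow 2-subgroup of G. Then P is dihedral of order 8, N_G(P) = P, every subgroup of P of order 2 is either complemented in P or contained in Z(P), but G is not 2-nilpotent. -/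
/-! The rotation `c[0, 1, 2, 3]` and the reflection `c[1, 3]` of a square with vertices
`0, 1, 2, 3` embed `D₈` into `S₄`; its image has order 8 and index 3, so it is a Sylow
2-subgroup, and every other one is a conjugate, hence again the image of an embedding of `D₈`.
In a dihedral group an involution is either a rotation, which is central, or a reflection,
whose subgroup is complemented by the rotations. A Sylow 2-subgroup has prime index and is
not normal (conjugating `(1 3)` by `(0 1)` leaves it), so it is its own normalizer. A normal
subgroup of 2-power index contains every element of order 3, in particular `(0 1 2)` and
`(0 1 3)`, whose product `(0 2)(1 3)` has order 2; so it cannot have odd order. -/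

open Subgroup Pointwise

section
variable {G : Type*} [Group G]

theorem mem_of_pow_eq_one_of_index_eq_pow {H : Subgroup G} [H.Normal] {p m n : ℕ}
    (hpm : p.Coprime m) (hidx : H.index = p ^ n) {g : G} (hg : g ^ m = 1) : g ∈ H := by
  have hm : orderOf (g : G ⧸ H) ∣ m :=
    orderOf_dvd_of_pow_eq_one (by rw [← QuotientGroup.mk_pow, hg]; rfl)
  have hpn : orderOf (g : G ⧸ H) ∣ p ^ n := hidx ▸ H.index_eq_card ▸ orderOf_dvd_natCard _
  rw [← QuotientGroup.eq_one_iff, ← orderOf_eq_one_iff]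
  exact Nat.eq_one_of_dvd_coprimes (hpm.pow_left n) hpn hm

theorem not_isPNilpotent_of_orderOf_mul_eq {p m : ℕ} (hpm : p.Coprime m) {a b : G}
    (ha : a ^ m = 1) (hb : b ^ m = 1) (hab : orderOf (a * b) = p) : ¬ IsPNilpotent p G := by
  rintro ⟨H, _, hp, n, hidx⟩
  have hmem {g : G} (hg : g ^ m = 1) : g ∈ H := mem_of_pow_eq_one_of_index_eq_pow hpm hidx hg
  exact hp (hab ▸ H.orderOf_dvd_natCard (H.mul_mem (hmem ha) (hmem hb)))

theorem normalizer_eq_self_of_index_prime {H : Subgroup G} (hH : H.index.Prime)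
    (hn : ¬ H.Normal) : normalizer (H : Set G) = H := by
  have hle : H ≤ normalizer (H : Set G) := le_normalizer
  rcases (Nat.dvd_prime hH).1 (index_dvd_of_le hle) with h | h
  · exact absurd (normalizer_eq_top_iff.1 (index_eq_one.1 h)) hn
  · have hrel := relIndex_mul_index hle
    rw [h, Nat.mul_eq_right hH.ne_zero] at hrel
    exact le_antisymm (relIndex_eq_one.1 hrel) hle

theorem eq_bot_or_eq_of_le_of_card_prime {H K : Subgroup G} (hH : (Nat.card H).Prime)
    (hKH : K ≤ H) : K = ⊥ ∨ K = H := by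
  have : Finite H := Nat.finite_of_card_ne_zero hH.ne_zero
  refine ((Nat.dvd_prime hH).1 (card_dvd_of_le hKH)).imp card_eq_one.1 fun h => ?_
  exact eq_of_le_of_card_ge hKH h.ge

theorem inf_eq_bot_of_card_prime {H K : Subgroup G} (hH : (Nat.card H).Prime)
    (hHK : ¬ H ≤ K) : H ⊓ K = ⊥ :=
  (eq_bot_or_eq_of_le_of_card_prime hH inf_le_left).resolve_right fun h =>
    hHK (h ▸ inf_le_right)

theorem eq_zpowers_of_card_prime {H : Subgroup G} (hH : (Nat.card H).Prime) {x : G}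
    (hx : x ∈ H) (hx1 : x ≠ 1) : H = zpowers x :=
  ((eq_bot_or_eq_of_le_of_card_prime hH (zpowers_le.2 hx)).resolve_left
    (zpowers_eq_bot.not.2 hx1)).symm

theorem map_center_le_centerOf_range {K : Type*} [Group K] (φ : K →* G) :
    (center K).map φ ≤ centerOf φ.range := by
  rintro _ ⟨z, hz, rfl⟩
  refine ⟨?_, z, rfl⟩
  rintro _ ⟨k, rfl⟩
  rw [← map_mul, ← map_mul, mem_center_iff.1 hz k]

end

namespace DihedralGroup
variable {n : ℕ}

theorem r_mem_zpowers_r_one (i : ZMod n) : r i ∈ zpowers (r 1 : DihedralGroup n) :=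
  mem_zpowers_iff.2 ⟨ZMod.cast i, by rw [r_one_zpow, ZMod.intCast_zmod_cast]⟩

theorem sr_notMem_zpowers_r_one (i : ZMod n) : sr i ∉ zpowers (r 1 : DihedralGroup n) := by
  rw [mem_zpowers_iff]
  rintro ⟨k, hk⟩
  rw [r_one_zpow] at hk
  cases hk

theorem r_mem_center_of_sq_eq_one {i : ZMod n} (hi : r i ^ 2 = 1) :
    r i ∈ center (DihedralGroup n) := by
  rw [r_pow, one_def, r.injEq] at hi
  rw [mem_center_iff]
  rintro (j | j)
  · rw [r_mul_r, r_mul_r, add_comm]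
  · rw [r_mul_sr, sr_mul_r]
    congr 1
    linear_combination hi

theorem complemented_or_le_center {H : Subgroup (DihedralGroup n)} (hH : Nat.card H = 2) :
    (∃ B : Subgroup (DihedralGroup n), (∀ g, ∃ h ∈ H, ∃ b ∈ B, g = h * b) ∧ H ⊓ B = ⊥) ∨
      H ≤ center (DihedralGroup n) := by
  obtain ⟨x, hxH, hx1⟩ := H.bot_or_exists_ne_one.resolve_left (by rintro rfl; simp at hH)
  have hx2 : x ^ 2 = 1 := orderOf_dvd_iff_pow_eq_one.1 (hH ▸ H.orderOf_dvd_natCard hxH)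
  have hprime : (Nat.card H).Prime := hH ▸ Nat.prime_two
  rcases x with i | i
  · right
    rw [eq_zpowers_of_card_prime hprime hxH hx1, zpowers_le]
    exact r_mem_center_of_sq_eq_one hx2
  · left
    refine ⟨zpowers (r 1), fun g => ?_,
      inf_eq_bot_of_card_prime hprime fun h => sr_notMem_zpowers_r_one i (h hxH)⟩
    rcases g with j | j
    · exact ⟨1, H.one_mem, r j, r_mem_zpowers_r_one j, (one_mul _).symm⟩
    · exact ⟨sr i, hxH, r (j - i), r_mem_zpowers_r_one _, by rw [sr_mul_r, add_sub_cancel]⟩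

theorem complemented_or_le_centerOf_range {G : Type*} [Group G] {φ : DihedralGroup n →* G}
    (hφ : Function.Injective φ) {H : Subgroup G} (hle : H ≤ φ.range) (hH : Nat.card H = 2) :
    (∃ B : Subgroup G, B ≤ φ.range ∧ (∀ g ∈ φ.range, ∃ h ∈ H, ∃ b ∈ B, g = h * b) ∧
      H ⊓ B = ⊥) ∨ H ≤ centerOf φ.range := by
  rw [← map_comap_eq_self hle] at hH ⊢
  rw [card_map_of_injective hφ] at hH
  rcases complemented_or_le_center hH with ⟨B, hHB, hinf⟩ | hc
  · refine .inl ⟨B.map φ, map_le_range φ B, ?_, ?_⟩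
    · rintro _ ⟨k, rfl⟩
      obtain ⟨h, hh, b, hb, rfl⟩ := hHB k
      exact ⟨φ h, mem_map_of_mem φ hh, φ b, mem_map_of_mem φ hb, map_mul φ h b⟩
    · rw [← map_inf_eq _ _ φ hφ, hinf, Subgroup.map_bot]
  · exact .inr ((map_mono hc).trans (map_center_le_centerOf_range φ))

theorem card_range_of_injective {G : Type*} [Group G] {φ : DihedralGroup n →* G}
    (hφ : Function.Injective φ) : Nat.card φ.range = 2 * n :=
  (Nat.card_congr (MonoidHom.ofInjective hφ).toEquiv).symm.trans nat_card

end DihedralGroup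

def dihedralToPerm : DihedralGroup 4 →* Equiv.Perm (Fin 4) where
  toFun
    | .r i => c[0, 1, 2, 3] ^ i.val
    | .sr i => c[1, 3] * c[0, 1, 2, 3] ^ i.val
  map_one' := by decide
  map_mul' := by decide

theorem dihedralToPerm_injective : Function.Injective dihedralToPerm := by decide

theorem range_dihedralToPerm_not_normal : ¬ dihedralToPerm.range.Normal := fun h => by
  have := h.conj_mem _ ⟨.sr 0, rfl⟩ c[0, 1]
  revert this
  decide

theorem index_dihedral_range_eq_three {φ : DihedralGroup 4 →* Equiv.Perm (Fin 4)}
    (hφ : Function.Injective φ) : φ.range.index = 3 := by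
  have := card_mul_index φ.range
  rw [DihedralGroup.card_range_of_injective hφ, Nat.card_perm, Nat.card_fin] at this
  simp only [Nat.factorial] at this
  omega

noncomputable def sylowDihedral : Sylow 2 (Equiv.Perm (Fin 4)) :=
  (IsPGroup.of_card (n := 3)
    (DihedralGroup.card_range_of_injective dihedralToPerm_injective)).toSylow
    (by rw [index_dihedral_range_eq_three dihedralToPerm_injective]; norm_num)

theorem Sylow.exists_dihedral_range_eq (P : Sylow 2 (Equiv.Perm (Fin 4))) :
    ∃ φ : DihedralGroup 4 →* Equiv.Perm (Fin 4), Function.Injective φ ∧ φ.range = P := by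
  obtain ⟨g, rfl⟩ := MulAction.exists_smul_eq (Equiv.Perm (Fin 4)) sylowDihedral P
  refine ⟨((MulAut.conj g : Equiv.Perm (Fin 4) ≃* Equiv.Perm (Fin 4)) :
      Equiv.Perm (Fin 4) →* Equiv.Perm (Fin 4)).comp dihedralToPerm,
    (MulAut.conj g).injective.comp dihedralToPerm_injective, ?_⟩
  rw [MonoidHom.range_comp, Sylow.coe_subgroup_smul]
  rfl

theorem Sylow.not_normal_two_perm_fin_four (P : Sylow 2 (Equiv.Perm (Fin 4))) :
    ¬ (P : Subgroup (Equiv.Perm (Fin 4))).Normal := fun h => by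
  have : Unique (Sylow 2 (Equiv.Perm (Fin 4))) := Sylow.unique_of_normal P h
  rw [Subsingleton.elim P sylowDihedral] at h
  exact range_dihedralToPerm_not_normal h

theorem not_isPNilpotent_two_perm_fin_four : ¬ IsPNilpotent 2 (Equiv.Perm (Fin 4)) :=
  not_isPNilpotent_of_orderOf_mul_eq (m := 3) (a := c[0, 1, 2]) (b := c[0, 1, 3]) (by norm_num)
    (by decide) (by decide) (orderOf_eq_prime (by decide) (by decide))

/-- the example `S₄` with `p = 2`. -/
theorem stmt9 (P : Sylow 2 (Equiv.Perm (Fin 4))) :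
    Nonempty ((P : Subgroup (Equiv.Perm (Fin 4))) ≃* DihedralGroup 4) ∧
    Nat.card (P : Subgroup (Equiv.Perm (Fin 4))) = 8 ∧
    Subgroup.normalizer ((P : Subgroup (Equiv.Perm (Fin 4))) : Set (Equiv.Perm (Fin 4))) = P ∧
    (∀ H : Subgroup (Equiv.Perm (Fin 4)), H ≤ P → Nat.card H = 2 →
      (∃ B : Subgroup (Equiv.Perm (Fin 4)), B ≤ P ∧
        (∀ g ∈ (P : Subgroup (Equiv.Perm (Fin 4))), ∃ h ∈ H, ∃ b ∈ B, g = h * b) ∧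
        H ⊓ B = ⊥) ∨
      H ≤ centerOf (P : Subgroup (Equiv.Perm (Fin 4)))) ∧
    ¬ IsPNilpotent 2 (Equiv.Perm (Fin 4)) := by
  obtain ⟨φ, hφ, hP⟩ := P.exists_dihedral_range_eq
  rw [← hP]
  have hindex : φ.range.index.Prime := by
    rw [index_dihedral_range_eq_three hφ]
    norm_num
  exact ⟨⟨(MonoidHom.ofInjective hφ).symm⟩, DihedralGroup.card_range_of_injective hφ,
    normalizer_eq_self_of_index_prime hindex (hP ▸ P.not_normal_two_perm_fin_four),
    fun H hle hH => DihedralGroup.complemented_or_le_centerOf_range hφ hle hH,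
    not_isPNilpotent_two_perm_fin_four⟩
end

section
/- Let P be a Sylow p-subgroup of a finite group G. Then P ∩ G^{𝔑} = P ∩ G^{𝔑_p}, where G^{𝔑} is the nilpotent residual and G^{𝔑_p} is the p-nilpotent residual of G. -/
open Subgroup Pointwise

/-- The quotient `G ⧸ N` is nilpotent (for `N` normal). -/
def QuotientIsNilpotent {G : Type*} [Group G] (N : Subgroup G) : Prop :=
  ∀ [N.Normal], Group.IsNilpotent (G ⧸ N)

/-- `R` is the nilpotent residual of `G`. -/
def IsNilpotentResidual {G : Type*} [Group G] (R : Subgroup G) : Prop :=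
  R.Normal ∧ QuotientIsNilpotent R ∧
    ∀ N : Subgroup G, N.Normal → QuotientIsNilpotent N → R ≤ N

/-- The quotient `G ⧸ N` is p-nilpotent (for `N` normal). -/
def QuotientIsPNilpotent (p : ℕ) {G : Type*} [Group G] (N : Subgroup G) : Prop :=
  ∀ [N.Normal], IsPNilpotent p (G ⧸ N)

/-- `R` is the p-nilpotent residual of `G`. -/
def IsPNilpotentResidual (p : ℕ) {G : Type*} [Group G] (R : Subgroup G) : Prop :=
  R.Normal ∧ QuotientIsPNilpotent p R ∧
    ∀ N : Subgroup G, N.Normal → QuotientIsPNilpotent p N → R ≤ N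

/-!
Since nilpotent groups are `p`-nilpotent, `G^𝔑_p ≤ G^𝔑`. Conversely, if `H / G^𝔑_p` is the normal
Hall `p'`-subgroup of `G / G^𝔑_p`, then `G / H` is a `p`-group, hence nilpotent, so `G^𝔑 ≤ H`;
a `p`-element of `G^𝔑` therefore maps to a `p`-element of a `p'`-group, i.e. lies in `G^𝔑_p`.
-/

theorem IsPGroup.eq_bot_of_le_of_coprime {p : ℕ} {K : Type*} [Group K] {X H : Subgroup K}
    (hX : IsPGroup p X) (hXH : X ≤ H) (hH : p.Coprime (Nat.card H)) : X = ⊥ := by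
  refine eq_bot_iff.2 fun x hx => ?_
  have hcop : (orderOf x).Coprime (Nat.card H) := by
    simpa using hX.orderOf_coprime hH ⟨x, hx⟩
  exact orderOf_eq_one_iff.1 <| hcop.eq_one_of_dvd (H.orderOf_dvd_natCard (hXH hx))

theorem isPNilpotent_of_surjective_sylow {p : ℕ} [Fact p.Prime] {K : Type*} [Group K]
    [Finite K] (P : Sylow p K) (f : K →* P) (hf : Function.Surjective f) : IsPNilpotent p K := by
  have hindex : f.ker.index = Nat.card P := by
    rw [index_ker, MonoidHom.range_eq_top.2 hf, card_top]
  have hcard : Nat.card f.ker = P.index := by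
    have h := f.ker.card_mul_index
    rw [hindex, ← (P : Subgroup K).card_mul_index, mul_comm] at h
    exact Nat.eq_of_mul_eq_mul_left Nat.card_pos h
  obtain ⟨n, hn⟩ := P.isPGroup'.exists_card_eq
  exact ⟨f.ker, inferInstance, hcard ▸ P.not_dvd_index, n, hindex.trans hn⟩

theorem isPNilpotent_of_isNilpotent {p : ℕ} (hp : p.Prime) (K : Type*) [Group K] [Finite K]
    [Group.IsNilpotent K] : IsPNilpotent p K := by
  have : Fact p.Prime := ⟨hp⟩
  by_cases hpK : p ∣ Nat.card K
  · let q : (Nat.card K).primeFactors := ⟨p, Nat.mem_primeFactors.2 ⟨hp, hpK, Nat.card_pos.ne'⟩⟩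
    let P : Sylow p K := default
    -- `K` is the direct product of its Sylow subgroups; project onto the `p`-factor.
    let e := Sylow.directProductOfNormal (G := K) fun _ => inferInstance
    let f : K →* P := (Pi.evalMonoidHom (fun Q : Sylow p K => Q) P).comp
      ((Pi.evalMonoidHom (fun r : (Nat.card K).primeFactors => ∀ Q : Sylow r K, Q) q).comp
        e.symm.toMonoidHom)
    exact isPNilpotent_of_surjective_sylow P f <|
      (Function.surjective_eval P).comp ((Function.surjective_eval q).comp e.symm.surjective)
  · exact ⟨⊤, inferInstance, by rwa [card_top], 0, by simp⟩

theorem IsPNilpotentResidual.le_of_isNilpotentResidual {p : ℕ} (hp : p.Prime) {G : Type*}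
    [Group G] [Finite G] {R₁ R₂ : Subgroup G} (hR₁ : IsNilpotentResidual R₁)
    (hR₂ : IsPNilpotentResidual p R₂) : R₂ ≤ R₁ := by
  obtain ⟨hR₁n, hR₁q, -⟩ := hR₁
  refine hR₂.2.2 R₁ hR₁n ?_
  intro _
  have : Group.IsNilpotent (G ⧸ R₁) := hR₁q
  exact isPNilpotent_of_isNilpotent hp _

theorem IsNilpotentResidual.inf_le_of_quotientIsPNilpotent {p : ℕ} (hp : p.Prime) {G : Type*}
    [Group G] [Finite G] {R : Subgroup G} (hR : IsNilpotentResidual R) {Q : Subgroup G}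
    (hQ : IsPGroup p Q) (N : Subgroup G) [N.Normal] (hN : QuotientIsPNilpotent p N) :
    Q ⊓ R ≤ N := by
  have : Fact p.Prime := ⟨hp⟩
  obtain ⟨H, hHn, hHp, n, hHi⟩ := hN
  let π := QuotientGroup.mk' N
  have hRH : R ≤ H.comap π := by
    refine hR.2.2 _ (hHn.comap π) ?_
    intro _
    have hcard : Nat.card (G ⧸ H.comap π) = p ^ n := by
      rw [← index_eq_card, index_comap_of_surjective _ (QuotientGroup.mk'_surjective N), hHi]
    exact (IsPGroup.of_card hcard).isNilpotent
  have hbot : (Q ⊓ H.comap π).map π = ⊥ :=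
    (hQ.to_inf_left.map π).eq_bot_of_le_of_coprime (map_le_iff_le_comap.2 inf_le_right)
      (hp.coprime_iff_not_dvd.2 hHp)
  calc Q ⊓ R ≤ Q ⊓ H.comap π := inf_le_inf_left Q hRH
    _ ≤ π.ker := (Subgroup.map_eq_bot_iff _).1 hbot
    _ = N := QuotientGroup.ker_mk' N

/-- `P ∩ G^{𝔑} = P ∩ G^{𝔑_p}` for a Sylow p-subgroup `P`. -/
theorem stmt12 (p : ℕ) (hp : p.Prime) (G : Type*) [Group G] [Finite G]
    (P : Sylow p G) (R1 R2 : Subgroup G)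
    (hR1 : IsNilpotentResidual R1) (hR2 : IsPNilpotentResidual p R2) :
    (P : Subgroup G) ⊓ R1 = (P : Subgroup G) ⊓ R2 := by
  have := hR2.1
  apply le_antisymm
  · exact le_inf inf_le_left (hR1.inf_le_of_quotientIsPNilpotent hp P.isPGroup' R2 hR2.2.1)
  · exact inf_le_inf_left _ (hR2.le_of_isNilpotentResidual hp hR1)
end
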